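/- (Core of Theorem 2, the reduced tight frame.) Let γ = [γ_1,…,γ_ℓ] be a partition of n, π ∈ Π_γ, and v ∈ ℝ^{Π_γ} a unit vector such that for every pair i ≠ j with γ_i = γ_j = t, v satisfies the sign symmetry v(ρ^{(ij)}) = (−1)^t·v(ρ) for all ρ ∈ Π_γ. Let M := span{ρ_L(σ)(B_π v) : σ ∈ S_n} ⊆ ℝ^{S_n} and suppose M is irreducible as a left S_n-module, with d := dim M. Let k_i denote the multiplicity of the part i in γ, set z_γ := m_γ/∏_i k_i!, and let Π̄_γ ⊆ Π_γ contain exactly one representative from each orbit of Π_γ under the action which permutes blocks of equal size (so |Π̄_γ| = z_γ). Then {√(d·m_γ/(n!·z_γ))·B_π̄ v : π̄ ∈ Π̄_γ} is a tight Parseval frame for M: for every f ∈ M, ∑_{π̄∈Π̄_γ} |⟨f, √(d·m_γ/(n!·z_γ))·B_π̄ v⟩|² = ‖f‖². -/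

import Mathlib

open Finset
open scoped Nat

/-- Ordered set partitions of `Fin n` of shape `γ : Fin ℓ → ℕ`: functions
`μ : Fin n → Fin ℓ` whose `j`-th block `μ⁻¹(j)` has exactly `γ j` elements. -/
def OSP (n ℓ : ℕ) (γ : Fin ℓ → ℕ) : Type :=
  {μ : Fin n → Fin ℓ // ∀ j : Fin ℓ, (Finset.univ.filter fun x => μ x = j).card = γ j}

instance {n ℓ : ℕ} {γ : Fin ℓ → ℕ} : Fintype (OSP n ℓ γ) := by
  unfold OSP; infer_instance

instance {n ℓ : ℕ} {γ : Fin ℓ → ℕ} : DecidableEq (OSP n ℓ γ) := by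
  unfold OSP; infer_instance

/-- The left action of `S_n` on ordered set partitions: `(σ · μ)(x) = μ (σ⁻¹ x)`. -/
def ospAct {n ℓ : ℕ} {γ : Fin ℓ → ℕ} (σ : Equiv.Perm (Fin n)) (μ : OSP n ℓ γ) : OSP n ℓ γ :=
  ⟨fun x => μ.1 (σ.symm x), fun j => by
    rw [← μ.2 j, ← Fintype.card_subtype, ← Fintype.card_subtype]
    exact Fintype.card_congr (σ.symm.subtypeEquiv fun a => Iff.rfl)⟩

/-- The characteristic ("lifting") map `B_π : ℝ^{Π_γ} → ℝ^{S_n}` given by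
`(B_π x)(σ) = x (σ⁻¹ · π)`. -/
def liftB {n ℓ : ℕ} {γ : Fin ℓ → ℕ} (π : OSP n ℓ γ) (x : OSP n ℓ γ → ℝ) :
    Equiv.Perm (Fin n) → ℝ :=
  fun σ => x (ospAct σ⁻¹ π)

/-- `ρ^{(ij)}`: the ordered set partition obtained from `ρ` by swapping blocks `i` and `j`
(of equal size), i.e. post-composing with the transposition of `i` and `j`. -/
def blockSwap {n ℓ : ℕ} {γ : Fin ℓ → ℕ} (i j : Fin ℓ) (hij : γ i = γ j)
    (ρ : OSP n ℓ γ) : OSP n ℓ γ :=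
  ⟨fun x => Equiv.swap i j (ρ.1 x), fun k => by
    have hγ : γ (Equiv.swap i j k) = γ k := by
      rcases eq_or_ne k i with rfl | hki
      · rw [Equiv.swap_apply_left]; exact hij.symm
      rcases eq_or_ne k j with rfl | hkj
      · rw [Equiv.swap_apply_right]; exact hij
      · rw [Equiv.swap_apply_of_ne_of_ne hki hkj]
    calc (Finset.univ.filter fun x => Equiv.swap i j (ρ.1 x) = k).card
        = (Finset.univ.filter fun x => ρ.1 x = Equiv.swap i j k).card := by
          congr 1; ext x
          simp only [Finset.mem_filter, Finset.mem_univ, true_and]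
          rw [Equiv.swap_apply_eq_iff]
      _ = γ (Equiv.swap i j k) := ρ.2 _
      _ = γ k := hγ⟩

/-- The left regular representation of `S_n` on `ℝ^{S_n}`: `(ρ_L(τ) f)(σ) = f (τ⁻¹ σ)`. -/
def rhoL {n : ℕ} (τ : Equiv.Perm (Fin n)) (f : Equiv.Perm (Fin n) → ℝ) :
    Equiv.Perm (Fin n) → ℝ :=
  fun σ => f (τ⁻¹ * σ)

/-- Two ordered set partitions are in the same orbit under permutations of blocks of equal
size iff one is obtained from the other by post-composing with a block-size preserving
permutation of `{1,…,ℓ}` (equivalently, they have the same underlying unordered blocks). -/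
def SameBlocks {n ℓ : ℕ} {γ : Fin ℓ → ℕ} (μ ν : OSP n ℓ γ) : Prop :=
  ∃ c : Equiv.Perm (Fin ℓ), (∀ k : Fin ℓ, γ (c k) = γ k) ∧ ν.1 = fun x => c (μ.1 x)

/-!
The frame operator `T = ∑_μ ⟪B_μ v, ·⟫ B_μ v` of the family indexed by all of `Π_γ` is
symmetric and commutes with the left regular representation, because `S_n` permutes this
family. As `M` is irreducible, `T` is a scalar `c` on `M`, and taking the trace over an
orthonormal basis of `M` gives `c·d = ∑_μ ‖B_μ v‖² = n!·‖v‖²`: the full family is a tight frame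
with bound `n!/d`. The sign symmetry of `v` gives `B_ρ v = ±B_μ v` whenever `ρ` and `μ` have the
same blocks, so `⟪f, B_μ v⟫²` only depends on the orbit of `μ`; all orbits have `m_γ/z_γ`
elements, since `S_n` acts transitively on `Π_γ` and maps orbits to orbits.
-/

open Module Submodule Set
open scoped RealInnerProductSpace

def IsIrreducibleUnder {R E G : Type*} [Semiring R] [AddCommMonoid E] [Module R E]
    (ρ : G → E → E) (M : Submodule R E) : Prop :=
  ∀ N : Submodule R E, N ≤ M → (∀ g, ∀ x ∈ N, ρ g x ∈ N) → N = ⊥ ∨ N = M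

theorem IsIrreducibleUnder.map_equiv {R E F G : Type*} [Semiring R] [AddCommMonoid E]
    [Module R E] [AddCommMonoid F] [Module R F] {ρ : G → E → E} {ρ' : G → F → F}
    {M : Submodule R E} (hirr : IsIrreducibleUnder ρ M) (L : E ≃ₗ[R] F)
    (hL : ∀ g x, L (ρ g x) = ρ' g (L x)) :
    IsIrreducibleUnder ρ' (M.map (L : E →ₗ[R] F)) := by
  intro N hN hinv
  have hle : N.comap (L : E →ₗ[R] F) ≤ M := fun x hx => by
    simpa using hN hx
  have hinv' : ∀ g, ∀ x ∈ N.comap (L : E →ₗ[R] F), ρ g x ∈ N.comap (L : E →ₗ[R] F) :=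
    fun g x hx => by simpa [mem_comap, hL] using hinv g _ hx
  have hN_eq : (N.comap (L : E →ₗ[R] F)).map (L : E →ₗ[R] F) = N :=
    map_comap_eq_of_surjective L.surjective N
  rcases hirr _ hle hinv' with h | h
  · left; rw [← hN_eq, h, Submodule.map_bot]
  · right; rw [← hN_eq, h]

section Frame

variable {E : Type*} [NormedAddCommGroup E] [InnerProductSpace ℝ E] {G : Type*}

theorem LinearMap.IsSymmetric.exists_eq_smul_of_isIrreducibleUnder {T : E →ₗ[ℝ] E}
    (hT : T.IsSymmetric) {M : Submodule ℝ E} [FiniteDimensional ℝ M]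
    (hTM : ∀ x ∈ M, T x ∈ M) {ρ : G → E →ₗ[ℝ] E} (hρM : ∀ g, ∀ x ∈ M, ρ g x ∈ M)
    (hcomm : ∀ g x, T (ρ g x) = ρ g (T x)) (hirr : IsIrreducibleUnder (fun g => ρ g) M) :
    ∃ c : ℝ, ∀ x ∈ M, T x = c • x := by
  rcases subsingleton_or_nontrivial M with hM | hM
  · refine ⟨0, fun x hx => ?_⟩
    obtain rfl : x = 0 := congrArg Subtype.val (Subsingleton.elim (⟨x, hx⟩ : M) 0)
    simp
  obtain ⟨c, hc⟩ : ∃ c, End.HasEigenvalue (T.restrict hTM) c :=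
    ⟨_, (hT.restrict_invariant hTM).hasEigenvalue_iSup_of_finiteDimensional⟩
  obtain ⟨u, hu⟩ := hc.exists_hasEigenvector
  have hinv : ∀ g, ∀ x ∈ M ⊓ End.eigenspace T c, ρ g x ∈ M ⊓ End.eigenspace T c := by
    rintro g x ⟨hxM, hx⟩
    rw [SetLike.mem_coe, End.mem_eigenspace_iff] at hx
    refine ⟨hρM g x hxM, ?_⟩
    rw [SetLike.mem_coe, End.mem_eigenspace_iff, hcomm, hx, map_smul]
  have hu_mem : (u : E) ∈ M ⊓ End.eigenspace T c := by
    refine ⟨u.2, ?_⟩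
    rw [SetLike.mem_coe, End.mem_eigenspace_iff]
    exact congrArg Subtype.val hu.apply_eq_smul
  rcases hirr _ inf_le_left hinv with hbot | htop
  · rw [hbot, mem_bot] at hu_mem
    exact absurd (Subtype.ext hu_mem) hu.2
  · refine ⟨c, fun x hx => ?_⟩
    rw [← htop] at hx
    exact End.mem_eigenspace_iff.mp hx.2

def frameOperator {ι : Type*} [Fintype ι] (b : ι → E) : E →ₗ[ℝ] E where
  toFun x := ∑ i, ⟪b i, x⟫ • b i
  map_add' x y := by simp only [inner_add_right, add_smul, Finset.sum_add_distrib]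
  map_smul' a x := by
    simp only [real_inner_smul_right, mul_smul, Finset.smul_sum, RingHom.id_apply]

variable {ι : Type*} [Fintype ι] (b : ι → E)

theorem frameOperator_apply (x : E) : frameOperator b x = ∑ i, ⟪b i, x⟫ • b i := rfl

theorem inner_frameOperator_self (x : E) : ⟪frameOperator b x, x⟫ = ∑ i, ⟪b i, x⟫ ^ 2 := by
  simp only [frameOperator_apply, sum_inner, real_inner_smul_left, sq]

theorem isSymmetric_frameOperator : (frameOperator b).IsSymmetric := fun x y => by
  simp only [frameOperator_apply, sum_inner, inner_sum, real_inner_smul_left,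
    real_inner_smul_right, real_inner_comm x]
  exact Finset.sum_congr rfl fun i _ => mul_comm _ _

theorem frameOperator_mem_span (x : E) : frameOperator b x ∈ span ℝ (range b) :=
  sum_mem fun i _ => smul_mem _ _ (subset_span (mem_range_self i))

theorem frameOperator_map_of_apply_eq (ρ : E →ₗᵢ[ℝ] E) (e : ι ≃ ι)
    (he : ∀ i, ρ (b i) = b (e i)) (x : E) :
    frameOperator b (ρ x) = ρ (frameOperator b x) := by
  simp only [frameOperator_apply, map_sum, map_smul]
  rw [← e.sum_comp]
  simp only [← he, LinearIsometry.inner_map_map]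

theorem sum_inner_frameOperator_orthonormalBasis {κ : Type*} [Fintype κ]
    (u : OrthonormalBasis κ ℝ (span ℝ (range b))) :
    ∑ j, ⟪(u j : E), frameOperator b (u j)⟫ = ∑ i, ‖b i‖ ^ 2 := by
  have hb : ∀ i, b i ∈ span ℝ (range b) := fun i => subset_span (mem_range_self i)
  calc ∑ j, ⟪(u j : E), frameOperator b (u j)⟫ = ∑ j, ∑ i, ⟪b i, (u j : E)⟫ ^ 2 :=
        Finset.sum_congr rfl fun j _ => by rw [real_inner_comm, inner_frameOperator_self]
    _ = ∑ i, ∑ j, ⟪(⟨b i, hb i⟩ : span ℝ (range b)), u j⟫ ^ 2 := Finset.sum_comm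
    _ = ∑ i, ‖b i‖ ^ 2 := by
        simp only [u.sum_sq_inner_left, coe_norm]

theorem finrank_mul_sum_sq_inner (ρ : G → E →ₗᵢ[ℝ] E)
    (hperm : ∀ g, ∃ e : ι ≃ ι, ∀ i, ρ g (b i) = b (e i))
    (hirr : IsIrreducibleUnder (fun g => ρ g) (span ℝ (range b)))
    {x : E} (hx : x ∈ span ℝ (range b)) :
    finrank ℝ (span ℝ (range b)) * ∑ i, ⟪b i, x⟫ ^ 2 = (∑ i, ‖b i‖ ^ 2) * ‖x‖ ^ 2 := by
  have := FiniteDimensional.span_of_finite ℝ (finite_range b)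
  have hcomm : ∀ g y, frameOperator b (ρ g y) = ρ g (frameOperator b y) := fun g y =>
    (hperm g).elim fun e he => frameOperator_map_of_apply_eq b (ρ g) e he y
  have hρM : ∀ g, ∀ y ∈ span ℝ (range b), ρ g y ∈ span ℝ (range b) := fun g y hy => by
    obtain ⟨e, he⟩ := hperm g
    have hmap : (span ℝ (range b)).map (ρ g).toLinearMap ≤ span ℝ (range b) := by
      rw [map_span, span_le]
      rintro _ ⟨_, ⟨i, rfl⟩, rfl⟩
      exact (he i).symm ▸ subset_span (mem_range_self (e i))
    exact hmap (mem_map_of_mem hy)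
  obtain ⟨c, hc⟩ := (isSymmetric_frameOperator b).exists_eq_smul_of_isIrreducibleUnder
    (fun y _ => frameOperator_mem_span b y) (ρ := fun g => (ρ g).toLinearMap) hρM hcomm hirr
  let u := stdOrthonormalBasis ℝ (span ℝ (range b))
  have htrace : c * finrank ℝ (span ℝ (range b)) = ∑ i, ‖b i‖ ^ 2 := by
    rw [← sum_inner_frameOperator_orthonormalBasis b u]
    have hu : ∀ j, ‖(u j : E)‖ = 1 := fun j => (norm_coe _).trans (u.orthonormal.1 j)
    simp [hc _ (u _).2, real_inner_smul_right, hu, mul_comm]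
  rw [← inner_frameOperator_self, hc x hx, real_inner_smul_left, real_inner_self_eq_norm_sq,
    ← htrace]
  ring

end Frame

@[elab_as_elim]
theorem Equiv.Perm.swap_induction_on_of_forall_apply_eq {α β : Type*} [DecidableEq α]
    [Fintype α] (f : α → β) {P : Equiv.Perm α → Prop} (one : P 1)
    (swap_mul : ∀ c i j, i ≠ j → f i = f j → P c → P (Equiv.swap i j * c))
    (c : Equiv.Perm α) (hc : ∀ a, f (c a) = f a) : P c := by
  induction hN : c.support.card using Nat.strong_induction_on generalizing c with
  | _ N ih =>
    by_cases h1 : c = 1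
    · exact h1 ▸ one
    obtain ⟨i, hi⟩ : ∃ i, c i ≠ i := not_forall.mp fun h => h1 (Equiv.ext h)
    have hswap : ∀ a, f (Equiv.swap i (c i) a) = f a := fun a => by
      rcases eq_or_ne a i with rfl | hai
      · rw [Equiv.swap_apply_left, hc]
      rcases eq_or_ne a (c i) with rfl | haci
      · rw [Equiv.swap_apply_right, hc]
      · rw [Equiv.swap_apply_of_ne_of_ne hai haci]
    rw [← Equiv.swap_mul_self_mul i (c i) c]
    refine swap_mul _ i (c i) hi.symm (hc i).symm (ih _ ?_ _ (fun a => ?_) rfl)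
    · exact hN ▸ Equiv.Perm.card_support_swap_mul hi
    · rw [Equiv.Perm.mul_apply, hswap, hc]

theorem Finset.sum_univ_eq_nsmul_sum_of_transversal {α M : Type*} [Fintype α]
    [AddCommMonoid M] {r : α → α → Prop} {R : Finset α} (hR : ∀ a, ∃! b, b ∈ R ∧ r a b)
    {k : ℕ} (hk : ∀ b ∈ R, Nat.card {a // r a b} = k) {g : α → M}
    (hg : ∀ a b, r a b → g a = g b) : ∑ a, g a = k • ∑ b ∈ R, g b := by
  classical
  calc ∑ a, g a = ∑ a, ∑ b ∈ R with r a b, g b := sum_congr rfl fun a _ => by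
        obtain ⟨b, ⟨hbR, hab⟩, huniq⟩ := hR a
        have hfilter : R.filter (r a) = {b} := by
          ext b'
          simp only [mem_filter, mem_singleton]
          exact ⟨fun h => huniq b' h, fun h => h ▸ ⟨hbR, hab⟩⟩
        rw [hfilter, sum_singleton, hg a b hab]
    _ = ∑ b ∈ R, ∑ a with r a b, g b := sum_comm' fun a b => by simp [and_comm]
    _ = k • ∑ b ∈ R, g b := by
        rw [smul_sum]
        refine sum_congr rfl fun b hb => ?_
        rw [sum_const, ← hk b hb, Nat.card_eq_fintype_card, Fintype.card_subtype]

section OrderedSetPartition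

variable {n ℓ : ℕ} {γ : Fin ℓ → ℕ}

instance : MulAction (Equiv.Perm (Fin n)) (OSP n ℓ γ) where
  smul := ospAct
  one_smul _ := rfl
  mul_smul _ _ _ := rfl

instance : MulAction.IsPretransitive (Equiv.Perm (Fin n)) (OSP n ℓ γ) where
  exists_smul_eq μ ν := by
    let e : ∀ j, {x // μ.1 x = j} ≃ {x // ν.1 x = j} := fun j =>
      Fintype.equivOfCardEq (by rw [Fintype.card_subtype, Fintype.card_subtype, μ.2, ν.2])
    let σ : Equiv.Perm (Fin n) := (Equiv.sigmaFiberEquiv μ.1).symm.trans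
      ((Equiv.sigmaCongrRight e).trans (Equiv.sigmaFiberEquiv ν.1))
    have hσ : ∀ y, ν.1 (σ y) = μ.1 y := fun y => (e (μ.1 y) ⟨y, rfl⟩).2
    refine ⟨σ, Subtype.ext (funext fun x => ?_)⟩
    show μ.1 (σ.symm x) = ν.1 x
    rw [← hσ (σ.symm x), Equiv.apply_symm_apply]

theorem liftB_apply (π : OSP n ℓ γ) (v : OSP n ℓ γ → ℝ) (σ : Equiv.Perm (Fin n)) :
    liftB π v σ = v (σ⁻¹ • π) := rfl

theorem rhoL_liftB (σ : Equiv.Perm (Fin n)) (π : OSP n ℓ γ) (v : OSP n ℓ γ → ℝ) :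
    rhoL σ (liftB π v) = liftB (σ • π) v := by
  funext τ
  simp only [rhoL, liftB_apply, mul_inv_rev, inv_inv, mul_smul]

theorem setOf_exists_eq_rhoL_liftB (π : OSP n ℓ γ) (v : OSP n ℓ γ → ℝ) :
    {f | ∃ σ : Equiv.Perm (Fin n), f = rhoL σ (liftB π v)} = range fun μ => liftB μ v := by
  ext f
  constructor
  · rintro ⟨σ, rfl⟩
    exact ⟨σ • π, (rhoL_liftB σ π v).symm⟩
  · rintro ⟨μ, rfl⟩
    obtain ⟨σ, rfl⟩ := MulAction.exists_smul_eq (Equiv.Perm (Fin n)) π μ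
    exact ⟨σ, (rhoL_liftB σ π v).symm⟩

theorem sum_sum_liftB_sq (v : OSP n ℓ γ → ℝ) :
    ∑ μ : OSP n ℓ γ, ∑ σ, liftB μ v σ ^ 2 = n ! * ∑ μ, v μ ^ 2 := by
  rw [Finset.sum_comm]
  have h : ∀ σ : Equiv.Perm (Fin n), ∑ μ, liftB μ v σ ^ 2 = ∑ μ, v μ ^ 2 := fun σ =>
    Equiv.sum_comp (MulAction.toPerm σ⁻¹) fun μ => v μ ^ 2
  simp only [h, sum_const, card_univ, Fintype.card_perm, Fintype.card_fin, nsmul_eq_mul]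

theorem finrank_mul_sum_sq_liftB (π : OSP n ℓ γ) (v : OSP n ℓ γ → ℝ)
    {M : Submodule ℝ (Equiv.Perm (Fin n) → ℝ)}
    (hM : M = span ℝ {f | ∃ σ : Equiv.Perm (Fin n), f = rhoL σ (liftB π v)})
    (hirr : IsIrreducibleUnder rhoL M) {f : Equiv.Perm (Fin n) → ℝ} (hf : f ∈ M) :
    finrank ℝ M * ∑ μ, (∑ τ, f τ * liftB μ v τ) ^ 2 = n ! * (∑ μ, v μ ^ 2) * ∑ τ, f τ ^ 2 := by
  -- `ℝ^{S_n}` carries the sup norm, so the frame argument runs in `EuclideanSpace`.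
  let L := (WithLp.linearEquiv 2 ℝ (Equiv.Perm (Fin n) → ℝ)).symm
  let b : OSP n ℓ γ → EuclideanSpace ℝ (Equiv.Perm (Fin n)) := fun μ => L (liftB μ v)
  let ρ (σ : Equiv.Perm (Fin n)) : EuclideanSpace ℝ (Equiv.Perm (Fin n)) →ₗᵢ[ℝ] _ :=
    (LinearIsometryEquiv.piLpCongrLeft 2 ℝ ℝ (Equiv.mulLeft σ)).toLinearIsometry
  have hL : ∀ σ g, L (rhoL σ g) = ρ σ (L g) := fun σ g => rfl
  have hspan : M.map (L : _ →ₗ[ℝ] _) = span ℝ (range b) := by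
    rw [hM, setOf_exists_eq_rhoL_liftB, map_span, ← range_comp]
    rfl
  have hperm : ∀ σ, ∃ e : OSP n ℓ γ ≃ OSP n ℓ γ, ∀ μ, ρ σ (b μ) = b (e μ) := fun σ =>
    ⟨MulAction.toPerm σ, fun μ => by rw [← hL, rhoL_liftB]; rfl⟩
  have key : finrank ℝ (span ℝ (range b)) * ∑ μ, ⟪b μ, L f⟫ ^ 2
      = (∑ μ, ‖b μ‖ ^ 2) * ‖L f‖ ^ 2 :=
    finrank_mul_sum_sq_inner b ρ hperm (hspan ▸ hirr.map_equiv L hL) (hspan ▸ mem_map_of_mem hf)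
  have hinner : ∀ μ, ⟪b μ, L f⟫ = ∑ τ, f τ * liftB μ v τ := fun μ => by
    simp [b, L, EuclideanSpace.inner_toLp_toLp, dotProduct]
  rw [← hspan, LinearEquiv.finrank_map_eq] at key
  simp only [hinner, EuclideanSpace.real_norm_sq_eq] at key
  rw [key, ← sum_sum_liftB_sq]
  rfl

end OrderedSetPartition

section Relabeling

variable {n ℓ : ℕ} {γ : Fin ℓ → ℕ}

theorem exists_sign_of_relabel (v : OSP n ℓ γ → ℝ)
    (hsym : ∀ (i j : Fin ℓ), i ≠ j → ∀ hij : γ i = γ j, ∀ ρ : OSP n ℓ γ,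
      v (blockSwap i j hij ρ) = (-1 : ℝ) ^ (γ i) * v ρ)
    {c : Equiv.Perm (Fin ℓ)} (hc : ∀ k, γ (c k) = γ k) :
    ∃ ε : ℝ, ε ^ 2 = 1 ∧
      ∀ μ ν : OSP n ℓ γ, (ν.1 = fun x => c (μ.1 x)) → v ν = ε * v μ := by
  refine Equiv.Perm.swap_induction_on_of_forall_apply_eq γ ?_ ?_ c hc
  · exact ⟨1, one_pow 2, fun μ ν h => by rw [one_mul, Subtype.ext h]⟩
  rintro c i j hij hγ ⟨ε, hε, hv⟩
  refine ⟨(-1) ^ γ i * ε, by rw [mul_pow, hε, ← pow_mul, pow_mul', neg_one_sq, one_pow, one_mul],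
    fun μ ν h => ?_⟩
  have hswap : v (blockSwap i j hγ ν) = ε * v μ :=
    hv μ _ (funext fun x => by simp [blockSwap, h])
  rw [hsym i j hij hγ ν] at hswap
  calc v ν = (-1) ^ γ i * ((-1) ^ γ i * v ν) := by
        rw [← mul_assoc, ← pow_add, ← two_mul, pow_mul, neg_one_sq, one_pow, one_mul]
    _ = (-1) ^ γ i * ε * v μ := by rw [hswap, mul_assoc]

theorem exists_liftB_eq_smul_of_sameBlocks (v : OSP n ℓ γ → ℝ)
    (hsym : ∀ (i j : Fin ℓ), i ≠ j → ∀ hij : γ i = γ j, ∀ ρ : OSP n ℓ γ,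
      v (blockSwap i j hij ρ) = (-1 : ℝ) ^ (γ i) * v ρ)
    {μ ν : OSP n ℓ γ} (h : SameBlocks μ ν) :
    ∃ ε : ℝ, ε ^ 2 = 1 ∧ liftB ν v = ε • liftB μ v := by
  obtain ⟨c, hc, hcν⟩ := h
  obtain ⟨ε, hε, hv⟩ := exists_sign_of_relabel v hsym hc
  exact ⟨ε, hε, funext fun σ => hv _ _ (funext fun x => congrFun hcν _)⟩

theorem sameBlocks_smul_iff (σ : Equiv.Perm (Fin n)) {μ ν : OSP n ℓ γ} :
    SameBlocks (σ • μ) (σ • ν) ↔ SameBlocks μ ν := by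
  constructor
  · rintro ⟨c, hc, h⟩
    refine ⟨c, hc, funext fun y => ?_⟩
    have hy : ν.1 (σ.symm (σ y)) = c (μ.1 (σ.symm (σ y))) := congrFun h (σ y)
    rwa [Equiv.symm_apply_apply] at hy
  · rintro ⟨c, hc, h⟩
    exact ⟨c, hc, funext fun x => congrFun h (σ.symm x)⟩

theorem card_sameBlocks_eq (π π' : OSP n ℓ γ) :
    Nat.card {μ // SameBlocks μ π} = Nat.card {μ // SameBlocks μ π'} := by
  obtain ⟨σ, rfl⟩ := MulAction.exists_smul_eq (Equiv.Perm (Fin n)) π π'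
  exact Nat.card_congr ((MulAction.toPerm σ).subtypeEquiv fun μ => (sameBlocks_smul_iff σ).symm)

end Relabeling

theorem reduced_tight_parseval_frame_general {n ℓ : ℕ} (γ : Fin ℓ → ℕ)
    (π : OSP n ℓ γ)
    (v : OSP n ℓ γ → ℝ) (hv : ∑ μ : OSP n ℓ γ, v μ ^ 2 = 1)
    (hsym : ∀ (i j : Fin ℓ), i ≠ j → ∀ hij : γ i = γ j, ∀ ρ : OSP n ℓ γ,
      v (blockSwap i j hij ρ) = (-1 : ℝ) ^ (γ i) * v ρ)
    (M : Submodule ℝ (Equiv.Perm (Fin n) → ℝ))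
    (hM : M = Submodule.span ℝ {f | ∃ σ : Equiv.Perm (Fin n), f = rhoL σ (liftB π v)})
    (hirr : ∀ N : Submodule ℝ (Equiv.Perm (Fin n) → ℝ), N ≤ M →
      (∀ τ : Equiv.Perm (Fin n), ∀ f ∈ N, rhoL τ f ∈ N) → N = ⊥ ∨ N = M)
    (d : ℕ) (hd : d = Module.finrank ℝ M)
    (R : Finset (OSP n ℓ γ))
    (hR : ∀ μ : OSP n ℓ γ, ∃! πb : OSP n ℓ γ, πb ∈ R ∧ SameBlocks μ πb) :
    ∀ f ∈ M,
      ∑ πb ∈ R,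
        (∑ τ : Equiv.Perm (Fin n), f τ *
          (Real.sqrt ((d * Fintype.card (OSP n ℓ γ) : ℝ) / ((n ! : ℝ) * R.card))
            * liftB πb v τ)) ^ 2
      = ∑ τ : Equiv.Perm (Fin n), f τ ^ 2 := by
  intro f hf
  have hk : ∀ πb ∈ R, Nat.card {μ // SameBlocks μ πb} = Nat.card {μ // SameBlocks μ π} :=
    fun πb _ => card_sameBlocks_eq πb π
  have hcard : Fintype.card (OSP n ℓ γ) = Nat.card {μ // SameBlocks μ π} * R.card := by
    simpa using
      sum_univ_eq_nsmul_sum_of_transversal hR hk (g := fun _ => (1 : ℕ)) fun _ _ _ => rfl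
  have hred := sum_univ_eq_nsmul_sum_of_transversal hR hk
    (g := fun μ => (∑ τ, f τ * liftB μ v τ) ^ 2) fun μ ν h => by
      obtain ⟨ε, hε, hν⟩ := exists_liftB_eq_smul_of_sameBlocks v hsym h
      simp only [hν, Pi.smul_apply, smul_eq_mul, mul_left_comm (f _), ← mul_sum, mul_pow, hε,
        one_mul]
  have hframe := finrank_mul_sum_sq_liftB π v hM hirr hf
  rw [hv, mul_one, hred, ← hd, nsmul_eq_mul] at hframe
  obtain ⟨πb, ⟨hπb, -⟩, -⟩ := hR π
  have hR0 : (R.card : ℝ) ≠ 0 := Nat.cast_ne_zero.mpr (card_ne_zero_of_mem hπb)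
  simp_rw [mul_left_comm (f _), ← mul_sum, mul_pow, ← mul_sum]
  rw [Real.sq_sqrt (by positivity), hcard]
  field_simp
  push_cast
  linear_combination (R.card : ℝ) * hframe

/-- core of Theorem 2 of the paper, the reduced tight frame:
let `γ` be a partition of `n` and `v` a unit vector of `ℝ^{Π_γ}` with the sign symmetry
`v(ρ^{(ij)}) = (−1)^t·v(ρ)` for all pairs of equal parts `γ_i = γ_j = t`. Let `M` be the
(irreducible) left `S_n`-module generated by `B_π v`, `d = dim M`, and let `R = Π̄_γ` be a
set of representatives, one from each orbit of `Π_γ` under permuting blocks of equal size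
(so `|Π̄_γ| = z_γ`). Then `{√(d·m_γ/(n!·z_γ))·B_π̄ v : π̄ ∈ Π̄_γ}` is a tight Parseval
frame for `M`. -/
theorem reduced_tight_parseval_frame {n ℓ : ℕ} (hn : 1 ≤ n) (γ : Fin ℓ → ℕ)
    (hpart : Antitone γ) (hsum : ∑ j, γ j = n) (π : OSP n ℓ γ)
    (v : OSP n ℓ γ → ℝ) (hv : ∑ μ : OSP n ℓ γ, v μ ^ 2 = 1)
    (hsym : ∀ (i j : Fin ℓ), i ≠ j → ∀ hij : γ i = γ j, ∀ ρ : OSP n ℓ γ,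
      v (blockSwap i j hij ρ) = (-1 : ℝ) ^ (γ i) * v ρ)
    (M : Submodule ℝ (Equiv.Perm (Fin n) → ℝ))
    (hM : M = Submodule.span ℝ {f | ∃ σ : Equiv.Perm (Fin n), f = rhoL σ (liftB π v)})
    (hMbot : M ≠ ⊥)
    (hirr : ∀ N : Submodule ℝ (Equiv.Perm (Fin n) → ℝ), N ≤ M →
      (∀ τ : Equiv.Perm (Fin n), ∀ f ∈ N, rhoL τ f ∈ N) → N = ⊥ ∨ N = M)
    (d : ℕ) (hd : d = Module.finrank ℝ M)
    (R : Finset (OSP n ℓ γ))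
    (hR : ∀ μ : OSP n ℓ γ, ∃! πb : OSP n ℓ γ, πb ∈ R ∧ SameBlocks μ πb) :
    ∀ f ∈ M,
      ∑ πb ∈ R,
        (∑ τ : Equiv.Perm (Fin n), f τ *
          (Real.sqrt ((d * Fintype.card (OSP n ℓ γ) : ℝ) / ((n ! : ℝ) * R.card))
            * liftB πb v τ)) ^ 2
      = ∑ τ : Equiv.Perm (Fin n), f τ ^ 2 :=
  reduced_tight_parseval_frame_general γ π v hv hsym M hM hirr d hd R hR
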